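/- arXiv:1001.4461 — 2 statements merged into one kernel-verified Lean document; each statement's English description precedes it below -/
import Mathlib

section
/- For every real κ > 0, the definite integral ∫₀^{π/2} sin θ · (cos θ + √(cos²θ + κ²))² / (2·√(cos²θ + κ²)) dθ equals (1 + √(1 + κ²))/2. Consequently, if κ = 2r/(1 − r²) with 0 < r < 1, the integral equals 1/(1 − r²). -/
open Real

/-
Under x = cos θ the integrand becomes (x + √(x² + c))² / (2√(x² + c)) dx with c = κ², which has
the antiderivative (x√(x² + c) + x²)/2; its increment over [0, 1] is (1 + √(1 + c))/2.
For κ = 2r/(1 - r²), 1 + κ² is the square of (1 + r²)/(1 - r²).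
-/

theorem hasDerivAt_mul_sqrt_sq_add_add_sq_div_two {c : ℝ} (hc : 0 < c) (x : ℝ) :
    HasDerivAt (fun x => (x * √(x ^ 2 + c) + x ^ 2) / 2)
      ((x + √(x ^ 2 + c)) ^ 2 / (2 * √(x ^ 2 + c))) x := by
  have hpos : 0 < x ^ 2 + c := by positivity
  have hsqrt : HasDerivAt (fun x => √(x ^ 2 + c)) (x / √(x ^ 2 + c)) x := by
    convert ((hasDerivAt_pow 2 x).add_const c).sqrt hpos.ne' using 1
    field_simp
    ring
  refine ((((hasDerivAt_id' x).mul hsqrt).add (hasDerivAt_pow 2 x)).div_const 2).congr_deriv ?_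
  field_simp
  ring

theorem integral_sin_mul_cos_add_sqrt_sq_div {c : ℝ} (hc : 0 < c) :
    ∫ θ in (0 : ℝ)..π / 2, sin θ * (cos θ + √(cos θ ^ 2 + c)) ^ 2 / (2 * √(cos θ ^ 2 + c)) =
      (1 + √(1 + c)) / 2 := by
  have hderiv : ∀ θ ∈ Set.uIcc 0 (π / 2),
      HasDerivAt (fun θ => -((cos θ * √(cos θ ^ 2 + c) + cos θ ^ 2) / 2))
        (sin θ * (cos θ + √(cos θ ^ 2 + c)) ^ 2 / (2 * √(cos θ ^ 2 + c))) θ := fun θ _ =>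
    ((hasDerivAt_mul_sqrt_sq_add_add_sq_div_two hc (cos θ)).comp θ
      (hasDerivAt_cos θ)).neg.congr_deriv (by ring)
  have hcont : Continuous fun θ =>
      sin θ * (cos θ + √(cos θ ^ 2 + c)) ^ 2 / (2 * √(cos θ ^ 2 + c)) :=
    Continuous.div (by fun_prop) (by fun_prop) fun θ => by positivity
  rw [intervalIntegral.integral_eq_sub_of_hasDerivAt hderiv (hcont.intervalIntegrable _ _)]
  norm_num
  ring

theorem sqrt_one_add_sq_two_mul_div_one_sub_sq {r : ℝ} (hr : |r| < 1) :
    √(1 + (2 * r / (1 - r ^ 2)) ^ 2) = (1 + r ^ 2) / (1 - r ^ 2) := by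
  have h : 0 < 1 - r ^ 2 := by nlinarith [sq_abs r, abs_nonneg r]
  rw [sqrt_eq_iff_mul_self_eq_of_pos (by positivity)]
  field_simp
  ring

theorem stmt_6 (κ : ℝ) (hκ : 0 < κ) :
    (∫ θ in (0:ℝ)..(Real.pi / 2),
        Real.sin θ * (Real.cos θ + Real.sqrt (Real.cos θ ^ 2 + κ ^ 2)) ^ 2
          / (2 * Real.sqrt (Real.cos θ ^ 2 + κ ^ 2)))
      = (1 + Real.sqrt (1 + κ ^ 2)) / 2 ∧
    ∀ r : ℝ, 0 < r → r < 1 → κ = 2 * r / (1 - r ^ 2) →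
      (∫ θ in (0:ℝ)..(Real.pi / 2),
          Real.sin θ * (Real.cos θ + Real.sqrt (Real.cos θ ^ 2 + κ ^ 2)) ^ 2
            / (2 * Real.sqrt (Real.cos θ ^ 2 + κ ^ 2)))
        = 1 / (1 - r ^ 2) := by
  have hmain := integral_sin_mul_cos_add_sqrt_sq_div (pow_pos hκ 2)
  refine ⟨hmain, fun r hr0 hr1 hκr => ?_⟩
  have hr : |r| < 1 := abs_lt.mpr ⟨by linarith, hr1⟩
  have h : 1 - r ^ 2 ≠ 0 := by nlinarith
  rw [hmain, hκr, sqrt_one_add_sq_two_mul_div_one_sub_sq hr]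
  field_simp
  ring
end

section
/- Let m > 1/2, κ ≥ 0, and θ ∈ (0, π). If sin θ · (cos θ + √(cos²θ + κ²)) > m, then (m² + κ²·sin²θ) / (2·(m − sin θ·cos θ)) > m. (The denominator is positive since m > 1/2.) -/
open Real

/- Writing `s = sin θ`, `c = cos θ` and `D = m - s c`, one has the identity
`m² + κ² s² - 2 m D = s² (c² + κ²) - D²`, so the claim reduces to `D² < s² (c² + κ²)`.
This follows by squaring the hypothesis `D < s √(c² + κ²)`, since `D > 0`
because `s c = sin (2θ) / 2 ≤ 1/2 < m`. -/

lemma sin_mul_cos_le_half (θ : ℝ) : sin θ * cos θ ≤ 1 / 2 := by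
  nlinarith [sq_nonneg (sin θ - cos θ), sin_sq_add_cos_sq θ]

lemma lt_div_of_lt_mul_add_sqrt {m κ s c : ℝ} (hD : s * c < m)
    (h : m < s * (c + √(c ^ 2 + κ ^ 2))) :
    m < (m ^ 2 + κ ^ 2 * s ^ 2) / (2 * (m - s * c)) := by
  have hsq : (m - s * c) ^ 2 < s ^ 2 * (c ^ 2 + κ ^ 2) :=
    calc (m - s * c) ^ 2 < (s * √(c ^ 2 + κ ^ 2)) ^ 2 :=
          pow_lt_pow_left₀ (by linarith) (sub_nonneg.2 hD.le) two_ne_zero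
      _ = s ^ 2 * (c ^ 2 + κ ^ 2) := by rw [mul_pow, sq_sqrt (by positivity)]
  rw [lt_div_iff₀ (by linarith)]
  linear_combination hsq

theorem stmt_12_general (m : ℝ) (hm : 1 / 2 < m) (κ : ℝ)
    (θ : ℝ)
    (h : m < Real.sin θ * (Real.cos θ + Real.sqrt (Real.cos θ ^ 2 + κ ^ 2))) :
    m < (m ^ 2 + κ ^ 2 * Real.sin θ ^ 2) / (2 * (m - Real.sin θ * Real.cos θ)) :=
  lt_div_of_lt_mul_add_sqrt ((sin_mul_cos_le_half θ).trans_lt hm) h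

theorem stmt_12 (m : ℝ) (hm : 1 / 2 < m) (κ : ℝ) (hκ : 0 ≤ κ)
    (θ : ℝ) (hθ : θ ∈ Set.Ioo 0 Real.pi)
    (h : m < Real.sin θ * (Real.cos θ + Real.sqrt (Real.cos θ ^ 2 + κ ^ 2))) :
    m < (m ^ 2 + κ ^ 2 * Real.sin θ ^ 2) / (2 * (m - Real.sin θ * Real.cos θ)) :=
  stmt_12_general m hm κ θ h
end
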